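/- Let f : (0,∞) → [0,∞], C₀,…,C_n ≥ 0, and define recursively f₋[C₀,…,C_{k+1}] = (f₋[C₀,…,C_k])₋[C_{k+1}], where g₋[C](λ) = sup_{p ∈ [λ+1,∞)} (2p g(λ/p) − C λ²/(p−1)). Then for every λ > 0: (1/2^{n+1}) f₋[C₀,…,C_n](λ) ≥ (1 + (n+1)λ) f(λ/(1 + (n+1)λ)) − (λ/2) Σ_{k=0}^{n} 2^{−k} C_k. -/
import Mathlib


open MeasureTheory Real

/-- The lower duplication operation `f₋[C]` (with truncated subtraction in `ℝ≥0∞`):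
`f₋[C](λ) = sup_{p ≥ λ+1} (2p f(λ/p) − C λ²/(p−1))`. -/
noncomputable def fminus (f : ℝ → ENNReal) (C : ℝ) (l : ℝ) : ENNReal :=
  ⨆ p ∈ Set.Ici (l + 1),
    ENNReal.ofReal (2 * p) * f (l / p) - ENNReal.ofReal (C * l ^ 2 / (p - 1))

/-- The iterated operation `f₋[C₀,…,C_n]`, defined by
`f₋[C₀,…,C_{k+1}] = (f₋[C₀,…,C_k])₋[C_{k+1}]`. -/
noncomputable def fminusIter (f : ℝ → ENNReal) (C : ℕ → ℝ) : ℕ → (ℝ → ENNReal)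
  | 0 => fminus f (C 0)
  | n + 1 => fminus (fminusIter f C n) (C (n + 1))

lemma key (f : ℝ → ENNReal) (c l : ℝ) (hl : 0 < l) :
    ENNReal.ofReal (2 * (l + 1)) * f (l / (l + 1)) - ENNReal.ofReal (c * l) ≤
      fminus f c l := by
  have h1 : c * l ^ 2 / (l + 1 - 1) = c * l := by
    rw [show l + 1 - 1 = l by ring]
    field_simp
  have h := le_biSup (f := fun p => ENNReal.ofReal (2 * p) * f (l / p) -
      ENNReal.ofReal (c * l ^ 2 / (p - 1))) (Set.mem_Ici.mpr (le_refl (l + 1)))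
  rw [h1] at h
  exact h

lemma two_pow_eq (m : ℕ) : (2 : ENNReal) ^ m = ENNReal.ofReal ((2:ℝ) ^ m) := by
  simp [ENNReal.ofReal_pow]

lemma aux (a b : ENNReal) (m : ℕ) : a * (b / 2 ^ m) = 2 * (a * b) / 2 ^ (m + 1) := by
  rw [pow_succ', ENNReal.mul_div_mul_left _ _ (by norm_num) (by norm_num), mul_div_assoc]

/-- For every `λ > 0`:
`(1/2^{n+1}) f₋[C₀,…,C_n](λ) ≥ (1 + (n+1)λ) f(λ/(1 + (n+1)λ)) − (λ/2) Σ_{k=0}^n 2^{−k} C_k`. -/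
theorem stmt11 (f : ℝ → ENNReal) (C : ℕ → ℝ) (hC : ∀ k, 0 ≤ C k) (n : ℕ)
    (l : ℝ) (hl0 : 0 < l) :
    ENNReal.ofReal (1 + (n + 1) * l) * f (l / (1 + (n + 1) * l)) -
        ENNReal.ofReal (l / 2 * ∑ k ∈ Finset.range (n + 1), C k / 2 ^ k) ≤
      fminusIter f C n l / 2 ^ (n + 1) := by
  induction n generalizing l with
  | zero =>
    have h := key f (C 0) l hl0
    rw [tsub_le_iff_right] at h ⊢
    simp only [Nat.cast_zero, zero_add, one_mul, Finset.sum_range_one, pow_zero, div_one,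
      fminusIter, pow_one]
    have h2 : ENNReal.ofReal (1 + l) * f (l / (1 + l)) =
        ENNReal.ofReal (2 * (l + 1)) * f (l / (l + 1)) / 2 := by
      rw [show l / (l + 1) = l / (1 + l) by rw [add_comm],
        ENNReal.ofReal_mul (by norm_num : (0:ℝ) ≤ 2),
        show ENNReal.ofReal (2:ℝ) = 2 by simp, show l + 1 = 1 + l by ring, mul_assoc,
        mul_comm (2:ENNReal), mul_div_assoc, ENNReal.div_self (by norm_num) (by norm_num),
        mul_one]
    rw [h2]
    calc ENNReal.ofReal (2 * (l + 1)) * f (l / (l + 1)) / 2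
        ≤ (fminus f (C 0) l + ENNReal.ofReal (C 0 * l)) / 2 := by gcongr
      _ = fminus f (C 0) l / 2 + ENNReal.ofReal (C 0 * l) / 2 := ENNReal.add_div
      _ = fminus f (C 0) l / 2 + ENNReal.ofReal (l / 2 * C 0) := by
          rw [show (2:ENNReal) = ENNReal.ofReal 2 by simp,
            ← ENNReal.ofReal_div_of_pos (by norm_num)]
          congr 1
          ring
  | succ n ih =>
    set l' := l / (l + 1) with hl'def
    have hlp : (0:ℝ) < l + 1 := by linarith
    have hl' : 0 < l' := by positivity
    have ihR := ih l' hl'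
    set g := fminusIter f C n with hg
    set S := ∑ k ∈ Finset.range (n + 1), C k / 2 ^ k with hS
    have hSnn : 0 ≤ S := by
      apply Finset.sum_nonneg; intro k _; have := hC k; positivity
    have hn : (0:ℝ) ≤ (n:ℝ) := n.cast_nonneg
    have hA : (l + 1) * (1 + ((n:ℝ) + 1) * l') = 1 + ((n:ℝ) + 1 + 1) * l := by
      rw [hl'def]; field_simp; ring
    have hdpos : (0:ℝ) < 1 + ((n:ℝ) + 1 + 1) * l := by positivity
    have hd'pos : (0:ℝ) < 1 + ((n:ℝ) + 1) * l' := by nlinarith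
    have h3 : l' * (l + 1) = l := by rw [hl'def]; field_simp
    have harg : l' / (1 + ((n:ℝ) + 1) * l') = l / (1 + ((n:ℝ) + 1 + 1) * l) := by
      rw [div_eq_div_iff hd'pos.ne' hdpos.ne', ← hA, ← mul_assoc, h3]
    have hB : (l + 1) * (l' / 2 * S) = l / 2 * S := by
      rw [hl'def]; field_simp
    simp only [fminusIter, ← hg]
    push_cast
    rw [tsub_le_iff_right] at ihR ⊢
    have hkey := key g (C (n + 1)) l hl0
    rw [tsub_le_iff_right] at hkey
    calc ENNReal.ofReal (1 + ((n:ℝ) + 1 + 1) * l) * f (l / (1 + ((n:ℝ) + 1 + 1) * l))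
        = ENNReal.ofReal (l + 1) *
          (ENNReal.ofReal (1 + ((n:ℝ) + 1) * l') * f (l' / (1 + ((n:ℝ) + 1) * l'))) := by
          rw [← mul_assoc, ← ENNReal.ofReal_mul (by positivity), hA, harg]
      _ ≤ ENNReal.ofReal (l + 1) * (g l' / 2 ^ (n + 1) + ENNReal.ofReal (l' / 2 * S)) := by
          gcongr
      _ = ENNReal.ofReal (l + 1) * (g l' / 2 ^ (n + 1)) + ENNReal.ofReal (l / 2 * S) := by
          rw [mul_add, ← ENNReal.ofReal_mul (by positivity), hB]
      _ = ENNReal.ofReal (2 * (l + 1)) * g l' / 2 ^ (n + 1 + 1) + ENNReal.ofReal (l / 2 * S) := by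
          congr 1
          rw [aux, ENNReal.ofReal_mul (by norm_num : (0:ℝ) ≤ 2),
            show ENNReal.ofReal (2:ℝ) = 2 by simp, mul_assoc]
      _ ≤ (fminus g (C (n + 1)) l + ENNReal.ofReal (C (n + 1) * l)) / 2 ^ (n + 1 + 1)
            + ENNReal.ofReal (l / 2 * S) := by gcongr
      _ = fminus g (C (n + 1)) l / 2 ^ (n + 1 + 1)
            + (ENNReal.ofReal (C (n + 1) * l) / 2 ^ (n + 1 + 1) + ENNReal.ofReal (l / 2 * S)) := by
          rw [ENNReal.add_div, add_assoc]
      _ = fminus g (C (n + 1)) l / 2 ^ (n + 1 + 1)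
            + ENNReal.ofReal (l / 2 * (S + C (n + 1) / 2 ^ (n + 1))) := by
          congr 1
          rw [two_pow_eq, ← ENNReal.ofReal_div_of_pos (by positivity),
            ← ENNReal.ofReal_add (div_nonneg (mul_nonneg (hC _) hl0.le) (by positivity))
              (mul_nonneg (by positivity) hSnn)]
          congr 1
          field_simp
          ring
      _ = fminus g (C (n + 1)) l / 2 ^ (n + 1 + 1)
            + ENNReal.ofReal (l / 2 * ∑ k ∈ Finset.range (n + 1 + 1), C k / 2 ^ k) := by
          rw [Finset.sum_range_succ, ← hS]
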